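/- For every Dyck path P of size n whose first corner is tracked by the involution φ (swapping the first bad corner): if P' = φ(P) ≠ P, then the first bad corner of P' occurs at the same position as the first bad corner of P, and it is a bad corner of the opposite type (peak vs valley). -/

import Mathlib

/-- A Dyck path of size `n`: a list of booleans (`true` = north step, `false` = east step)
from `(0,0)` to `(n,n)` staying weakly above the diagonal `y = x`. -/
def IsDyckPath (n : ℕ) (w : List Bool) : Prop :=
  w.length = 2 * n ∧ w.count true = n ∧
    ∀ k, (w.take k).count false ≤ (w.take k).count true

/-- The `y`-coordinate of the lattice point reached after `k` steps. -/
def ycoord (w : List Bool) (k : ℕ) : ℕ := (w.take k).count true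

/-- The `x`-coordinate of the lattice point reached after `k` steps. -/
def xcoord (w : List Bool) (k : ℕ) : ℕ := (w.take k).count false

/-- A peak: a north step at position `i` followed by an east step. -/
def IsPeak (w : List Bool) (i : ℕ) : Prop := w[i]? = some true ∧ w[i+1]? = some false

/-- A valley: an east step at position `i` followed by a north step. -/
def IsValley (w : List Bool) (i : ℕ) : Prop := w[i]? = some false ∧ w[i+1]? = some true

/-- Height above the diagonal after `k` steps. -/
def pdepth (w : List Bool) (k : ℕ) : ℤ := (ycoord w k : ℤ) - (xcoord w k : ℤ)

/-- Step `i` (a north step) of `w` is matched with step `j` (an east step):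
the facing east step at the same height (balanced-parentheses matching). -/
def Matches (w : List Bool) (i j : ℕ) : Prop :=
  i < j ∧ w[i]? = some true ∧ w[j]? = some false ∧
    pdepth w (j + 1) = pdepth w i ∧ ∀ k, i < k → k ≤ j → pdepth w i < pdepth w k

/-- The graph on `m` points whose edges are the upper arches and the lower arches;
its connected components are the components of the corresponding meander. -/
def meanderGraph (m : ℕ) (upper lower : ℕ → ℕ → Prop) : SimpleGraph (Fin m) where
  Adj i j := i ≠ j ∧ (upper i.1 j.1 ∨ upper j.1 i.1 ∨ lower i.1 j.1 ∨ lower j.1 i.1)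
  symm := by
    constructor
    intro i j h
    exact ⟨h.1.symm, by tauto⟩
  loopless := by
    constructor
    intro i h
    exact h.1 rfl

/-- The number of components of the meander with the matching of `P` above and the
matching of `Q` below. -/
noncomputable def trajPQ (n : ℕ) (P Q : List Bool) : ℕ :=
  Nat.card (meanderGraph (2 * n) (Matches P) (Matches Q)).ConnectedComponent

/-- The number of components of the meander with the matching of `P` above and the
rainbow matching `i ↦ 2n - 1 - i` below. -/
noncomputable def traj (n : ℕ) (P : List Bool) : ℕ :=
  Nat.card (meanderGraph (2 * n) (Matches P)
    (fun i j => i + j + 1 = 2 * n)).ConnectedComponent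

/-- No peak with even `y`-coordinate and no valley with odd `x`-coordinate. -/
def NoBadCorner (w : List Bool) : Prop :=
  (∀ i, IsPeak w i → Odd (ycoord w (i + 1))) ∧
  (∀ i, IsValley w i → Even (xcoord w (i + 1)))

/-- A bad corner: a peak with even `y`-coordinate or a valley with odd `x`-coordinate. -/
def IsBadCorner (w : List Bool) (i : ℕ) : Prop :=
  (IsPeak w i ∧ Even (ycoord w (i + 1))) ∨ (IsValley w i ∧ Odd (xcoord w (i + 1)))

/-- Interchange the two steps of the corner at positions `i`, `i+1`. -/
def swapCorner (w : List Bool) (i : ℕ) : List Bool :=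
  (w.set i (w.getD (i + 1) true)).set (i + 1) (w.getD i true)

open Classical in
/-- The involution `φ`: swap the two steps of the first bad corner, if any. -/
noncomputable def phiMap (w : List Bool) : List Bool :=
  if h : ∃ i, IsBadCorner w i then swapCorner w (Nat.find h) else w

/-- The number of unit squares between a Dyck path and the diagonal `y = x`. -/
def area (w : List Bool) : ℕ :=
  ((List.range w.length).map fun i =>
    if w.getD i true then 0 else ycoord w i - xcoord w i - 1).sum

/-- The zigzag Dyck path `(NE)^m`. -/
def zigzag (m : ℕ) : List Bool := (List.replicate m [true, false]).flatten

/-- `N^{2a_1} E^{2b_1} ⋯ N^{2a_t} E^{2b_t}` for `ab = [(a_1,b_1),…,(a_t,b_t)]`. -/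
def doubledWord (ab : List (ℕ × ℕ)) : List Bool :=
  (ab.map fun p => List.replicate (2 * p.1) true ++ List.replicate (2 * p.2) false).flatten

/-- `N^{a_1} E^{b_1} ⋯ N^{a_t} E^{b_t}` for `ab = [(a_1,b_1),…,(a_t,b_t)]`. -/
def halfWord (ab : List (ℕ × ℕ)) : List Bool :=
  (ab.map fun p => List.replicate p.1 true ++ List.replicate p.2 false).flatten

/-- All peaks at odd height (`height` = `y - x` at the peak's lattice point). -/
def AllPeaksOdd (w : List Bool) : Prop :=
  ∀ i, IsPeak w i → Odd (ycoord w (i + 1) - xcoord w (i + 1))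

/-- All peaks at even height. -/
def AllPeaksEven (w : List Bool) : Prop :=
  ∀ i, IsPeak w i → Even (ycoord w (i + 1) - xcoord w (i + 1))

/-- Steps of a Motzkin path: up, horizontal, down. -/
inductive MStep | U | H | D
deriving DecidableEq

/-- The total height change along a list of Motzkin steps. -/
def msum (l : List MStep) : ℤ :=
  (l.map fun s => match s with | MStep.U => 1 | MStep.H => 0 | MStep.D => -1).sum

/-- A Motzkin path of length `n`. -/
def IsMotzkin (n : ℕ) (l : List MStep) : Prop :=
  l.length = n ∧ msum l = 0 ∧ ∀ k, 0 ≤ msum (l.take k)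

/-- A Riordan path of length `n`: a Motzkin path with no horizontal step on the `x`-axis. -/
def IsRiordan (n : ℕ) (l : List MStep) : Prop :=
  IsMotzkin n l ∧ ∀ i, l[i]? = some MStep.H → msum (l.take i) ≠ 0

/-- The map `φ_A` from Dyck paths of size `n+1` (all peaks at odd height)
to Motzkin paths of length `n`: `v_j` is read off from steps `p_{2j} p_{2j+1}`. -/
def phiA (n : ℕ) (P : List Bool) : List MStep :=
  (List.range n).map fun j =>
    match P.getD (2 * j + 1) true, P.getD (2 * j + 2) true with
    | true, true => MStep.U
    | false, true => MStep.H
    | _, _ => MStep.D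

/-- The map `φ_B` from Dyck paths of size `n` (all peaks at even height)
to Riordan paths of length `n`: `u_j` is read off from steps `p_{2j-1} p_{2j}`. -/
def phiB (n : ℕ) (P : List Bool) : List MStep :=
  (List.range n).map fun j =>
    match P.getD (2 * j) true, P.getD (2 * j + 1) true with
    | true, true => MStep.U
    | false, true => MStep.H
    | _, _ => MStep.D

/-!
Before the first bad corner the path is forced into a rigid parity pattern: every north step
lies on a line `x = even` and every east step on a line `y = odd` (the first step is north
from the origin, and a change of direction at a good corner preserves the pattern). Hence a
bad peak `NE` at `i` starts at an even `x`, so swapping it produces a valley `EN` with odd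
`x`-coordinate, i.e. a bad valley; dually a bad valley becomes a bad peak. The swap does not
touch any earlier corner except the one just before `i`, and that one cannot have become bad,
because its coordinate is one less than that of the bad corner at `i`.
-/

variable {w : List Bool} {i j : ℕ}

lemma ycoord_succ_of_north (h : w[j]? = some true) : ycoord w (j + 1) = ycoord w j + 1 := by
  simp [ycoord, List.take_add_one, h]

lemma ycoord_succ_of_east (h : w[j]? = some false) : ycoord w (j + 1) = ycoord w j := by
  simp [ycoord, List.take_add_one, h]

lemma xcoord_succ_of_north (h : w[j]? = some true) : xcoord w (j + 1) = xcoord w j := by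
  simp [xcoord, List.take_add_one, h]

lemma xcoord_succ_of_east (h : w[j]? = some false) : xcoord w (j + 1) = xcoord w j + 1 := by
  simp [xcoord, List.take_add_one, h]

lemma IsDyckPath.getElem?_zero_ne_east {n : ℕ} (hP : IsDyckPath n w) : w[0]? ≠ some false := by
  intro h
  have h1 := hP.2.2 1
  rw [List.take_one, List.head?_eq_getElem?, h] at h1
  simp at h1

lemma parity_of_forall_lt_not_isBadCorner (h0 : w[0]? ≠ some false)
    (hmin : ∀ k < j, ¬ IsBadCorner w k) :
    (w[j]? = some true → Even (xcoord w j)) ∧ (w[j]? = some false → Odd (ycoord w j)) := by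
  induction j with
  | zero => exact ⟨fun _ => by simp [xcoord], fun h => absurd h h0⟩
  | succ j ih =>
    have ih := ih fun k hk => hmin k (by omega)
    have hj := hmin j (by omega)
    have hprev {c : Bool} (hc : w[j + 1]? = some c) : w[j]? = some true ∨ w[j]? = some false := by
      have := (List.getElem?_eq_some_iff.mp hc).1
      rw [List.getElem?_eq_getElem (by omega)]
      cases w[j] <;> simp
    constructor
    · intro hc
      rcases hprev hc with hb | hb
      · rw [xcoord_succ_of_north hb]
        exact ih.1 hb
      · exact Nat.not_odd_iff_even.mp fun hodd => hj (Or.inr ⟨⟨hb, hc⟩, hodd⟩)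
    · intro hc
      rcases hprev hc with hb | hb
      · exact Nat.not_even_iff_odd.mp fun heven => hj (Or.inl ⟨⟨hb, hc⟩, heven⟩)
      · rw [ycoord_succ_of_east hb]
        exact ih.2 hb

lemma take_swapCorner_of_le (h : j ≤ i) : (swapCorner w i).take j = w.take j := by
  rw [swapCorner, List.take_set_of_le (by omega), List.take_set_of_le h]

lemma ycoord_swapCorner_of_le (h : j ≤ i) : ycoord (swapCorner w i) j = ycoord w j := by
  rw [ycoord, take_swapCorner_of_le h, ycoord]

lemma xcoord_swapCorner_of_le (h : j ≤ i) : xcoord (swapCorner w i) j = xcoord w j := by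
  rw [xcoord, take_swapCorner_of_le h, xcoord]

lemma getElem?_swapCorner_of_ne (h : j ≠ i) (h' : j ≠ i + 1) :
    (swapCorner w i)[j]? = w[j]? := by
  rw [swapCorner, List.getElem?_set_ne (by omega), List.getElem?_set_ne (by omega)]

lemma getElem?_swapCorner {a b : Bool} (ha : w[i]? = some a) (hb : w[i + 1]? = some b) :
    (swapCorner w i)[i]? = some b ∧ (swapCorner w i)[i + 1]? = some a := by
  have hlen := (List.getElem?_eq_some_iff.mp hb).1
  simp only [swapCorner, List.getD_eq_getElem?_getD, ha, hb, Option.getD_some]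
  rw [List.getElem?_set_ne (by omega), List.getElem?_set_self (by omega),
    List.getElem?_set_self (by simpa using hlen)]
  simp

lemma IsPeak.isValley_swapCorner (h : IsPeak w i) : IsValley (swapCorner w i) i :=
  getElem?_swapCorner h.1 h.2

lemma IsValley.isPeak_swapCorner (h : IsValley w i) : IsPeak (swapCorner w i) i :=
  getElem?_swapCorner h.1 h.2

lemma IsPeak.isBadCorner_swapCorner (h : IsPeak w i) (hx : Even (xcoord w i)) :
    IsBadCorner (swapCorner w i) i := by
  have hv := h.isValley_swapCorner
  refine Or.inr ⟨hv, ?_⟩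
  rw [xcoord_succ_of_east hv.1, xcoord_swapCorner_of_le le_rfl]
  exact hx.add_one

lemma IsValley.isBadCorner_swapCorner (h : IsValley w i) (hy : Odd (ycoord w i)) :
    IsBadCorner (swapCorner w i) i := by
  have hp := h.isPeak_swapCorner
  refine Or.inl ⟨hp, ?_⟩
  rw [ycoord_succ_of_north hp.1, ycoord_swapCorner_of_le le_rfl]
  exact hy.add_one

lemma isBadCorner_swapCorner_iff_of_succ_lt (h : j + 1 < i) :
    IsBadCorner (swapCorner w i) j ↔ IsBadCorner w j := by
  rw [IsBadCorner, IsBadCorner, IsPeak, IsPeak, IsValley, IsValley,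
    getElem?_swapCorner_of_ne (by omega) (by omega), getElem?_swapCorner_of_ne (by omega) (by omega),
    ycoord_swapCorner_of_le h.le, xcoord_swapCorner_of_le h.le]

lemma not_isBadCorner_swapCorner_pred (h : IsBadCorner w (j + 1)) :
    ¬ IsBadCorner (swapCorner w (j + 1)) j := by
  rcases h with ⟨⟨hN, hE⟩, hy⟩ | ⟨⟨hE, hN⟩, hx⟩
  · have hE' := (getElem?_swapCorner hN hE).1
    rintro (⟨⟨-, -⟩, heven⟩ | ⟨⟨-, hN'⟩, -⟩)
    · rw [ycoord_swapCorner_of_le le_rfl] at heven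
      rw [ycoord_succ_of_north hN] at hy
      exact Nat.even_add_one.mp hy heven
    · simp [hE'] at hN'
  · have hN' := (getElem?_swapCorner hE hN).1
    rintro (⟨⟨-, hE'⟩, -⟩ | ⟨⟨-, -⟩, hodd⟩)
    · simp [hN'] at hE'
    · rw [xcoord_swapCorner_of_le le_rfl] at hodd
      rw [xcoord_succ_of_east hE] at hx
      exact Nat.odd_add_one.mp hx hodd

lemma not_isBadCorner_swapCorner_of_lt (hi : IsBadCorner w i)
    (hmin : ∀ j < i, ¬ IsBadCorner w j) (hj : j < i) : ¬ IsBadCorner (swapCorner w i) j := by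
  obtain hlt | rfl := Nat.lt_or_eq_of_le hj
  · rw [isBadCorner_swapCorner_iff_of_succ_lt hlt]
    exact hmin j hj
  · exact not_isBadCorner_swapCorner_pred hi

/-- If `i` is the position of the first bad corner of a Dyck path `P`, then after swapping
the two steps at `i`, the resulting path has its first bad corner at the same position `i`,
of the opposite type. -/
theorem first_bad_corner_swap (n : ℕ) (P : List Bool) (hP : IsDyckPath n P) (i : ℕ)
    (hi : IsBadCorner P i) (hmin : ∀ j < i, ¬ IsBadCorner P j) :
    IsBadCorner (swapCorner P i) i ∧ (∀ j < i, ¬ IsBadCorner (swapCorner P i) j) ∧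
    (IsPeak P i → IsValley (swapCorner P i) i) ∧
    (IsValley P i → IsPeak (swapCorner P i) i) := by
  have hparity := parity_of_forall_lt_not_isBadCorner hP.getElem?_zero_ne_east hmin
  refine ⟨?_, fun j => not_isBadCorner_swapCorner_of_lt hi hmin, IsPeak.isValley_swapCorner,
    IsValley.isPeak_swapCorner⟩
  rcases hi with ⟨hpeak, -⟩ | ⟨hvalley, -⟩
  · exact hpeak.isBadCorner_swapCorner (hparity.1 hpeak.1)
  · exact hvalley.isBadCorner_swapCorner (hparity.2 hvalley.1)
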